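/- Let N be an irreducible D_t-module with s | t. Then the induced D_s-module N↑^s_t = D_s ⊗_{D_t} N is semisimple. Specifically, every D_s-submodule Q of N↑^s_t is a direct summand: averaging a D_t-linear projection α onto Q over the cosets via ñ ↦ (s/t) Σ_{i=0}^{t/s - 1} (Φ^{-is} ∘ α ∘ Φ^{is})(ñ) yields a D_s-linear projection onto Q. -/

import Mathlib

/-- A subspace `p` is stable under the (semilinear) action `g`. -/
def DiffStab {F V : Type*} [Field F] [AddCommGroup V] [Module F V]
    (g : V → V) (p : Submodule F V) : Prop :=
  ∀ x ∈ p, g x ∈ p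

/-- `(V, A)` realizes the induced module `D_s ⊗_{D_t} (W, Ψ)` with `k = t/s`. -/
def IsInducedTw {F W V : Type*} [Field F] [AddCommGroup W] [Module F W]
    [AddCommGroup V] [Module F V]
    (τ : F → F) (A : V → V) (k : ℕ) (Ψ : W → W) : Prop :=
  ∃ j : W →+ V,
    (∀ (f : F) (w : W), j (f • w) = τ f • j w) ∧
    (∀ w : W, A^[k] (j w) = j (Ψ w)) ∧
    (∀ v : V, ∃! c : Fin k → W, v = ∑ i : Fin k, A^[(i : ℕ)] (j (c i)))

/-!
Restricted to `D_t`, the induced module is the sum of the translates `Φ^{is} ⊗ N`, each zero or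
simple, so in the lattice of `Φ^t`-stable subspaces every element has a complement. For a
`Φ^s`-stable `Q`, the projection `π` onto `Q` along such a complement commutes with `Φ^t`, so
`π ↦ Φ^{-s} π Φ^s` permutes its conjugates with period `t/s`; their average, with `t/s`
invertible in characteristic zero, is a `Φ^s`-equivariant projection onto `Q`, and its kernel is
a `Φ^s`-stable complement.
-/

open Finset Function

theorem DiffStab.iterate {F V : Type*} [Field F] [AddCommGroup V] [Module F V] {g : V → V}
    {p : Submodule F V} (h : DiffStab g p) (n : ℕ) : DiffStab g^[n] p :=
  Set.MapsTo.iterate h n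

theorem map_sum_range_iterate_of_isPeriodicPt {M : Type*} [AddCommMonoid M] {G : Type*}
    [FunLike G M M] [AddMonoidHomClass G M M] (c : G) {k : ℕ} {x : M}
    (h : IsPeriodicPt c k x) : c (∑ i ∈ range k, c^[i] x) = ∑ i ∈ range k, c^[i] x := by
  rcases k with _ | k
  · simp
  · simp only [map_sum, ← iterate_succ_apply' c]
    rw [sum_range_succ (fun i => c^[i + 1] x), h.eq, sum_range_succ' (fun i => c^[i] x),
      iterate_zero_apply]

section StableSubmodules

variable {F V : Type*} [Field F] [AddCommGroup V] [Module F V]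

def stableSubmodules (g : V →+ V) : CompleteSublattice (Submodule F V) :=
  .mk' {p | DiffStab g p}
    (fun s hs => by
      rw [sSup_eq_iSup']
      intro x hx
      refine Submodule.iSup_induction _ (motive := fun x => g x ∈ ⨆ p : s, (p : Submodule F V))
        hx (fun p x hx => Submodule.mem_iSup_of_mem p (hs p.2 x hx)) (by simp) fun x y hx hy => ?_
      simpa using add_mem hx hy)
    (fun s hs x hx => Submodule.mem_sInf.2 fun p hp =>
      hs hp x (Submodule.mem_sInf.1 hx p hp))

variable (g : V →+ V)

instance : IsModularLattice (stableSubmodules (F := F) g) :=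
  ⟨fun {x y z} h => by
    show ((x ⊔ y) ⊓ z : Submodule F V) ≤ x ⊔ y ⊓ z
    exact IsModularLattice.sup_inf_le_assoc_of_le (y : Submodule F V)
      (show (x : Submodule F V) ≤ z from h)⟩

instance [FiniteDimensional F V] : WellFoundedGT (stableSubmodules (F := F) g) :=
  Subtype.wellFoundedGT _

instance [FiniteDimensional F V] : IsCompactlyGenerated (stableSubmodules (F := F) g) :=
  CompleteLattice.isCompactlyGenerated_of_wellFoundedGT

theorem exists_diffStab_isCompl_of_iSup_eq_top [FiniteDimensional F V] {ι : Type*}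
    (M : ι → Submodule F V) (hM : ∀ i, DiffStab g (M i))
    (hMirr : ∀ i p, p ≤ M i → DiffStab g p → p = ⊥ ∨ p = M i) (hMtop : ⨆ i, M i = ⊤)
    (Q : Submodule F V) (hQ : DiffStab g Q) :
    ∃ R, DiffStab g R ∧ IsCompl Q R := by
  let L := stableSubmodules (F := F) g
  have hatom : ∀ i, (⟨M i, hM i⟩ : L) = ⊥ ∨ IsAtom (⟨M i, hM i⟩ : L) := by
    intro i
    refine or_iff_not_imp_left.2 fun hne => ⟨hne, fun p hp => ?_⟩
    exact Subtype.ext ((hMirr i p hp.le p.2).resolve_right fun h => hp.ne (Subtype.ext h))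
  have htop : (⊤ : L) = ⨆ i, ⟨M i, hM i⟩ := Subtype.ext (by simpa using hMtop.symm)
  have hcompl : ComplementedLattice L := by
    refine complementedLattice_of_sSup_atoms_eq_top (eq_top_iff.2 ?_)
    rw [htop]
    exact iSup_le fun i => (hatom i).elim (fun h => h ▸ bot_le) fun h => le_sSup h
  exact CompleteSublattice.isComplemented_iff.1 hcompl Q hQ

theorem diffStab_range {W : Type*} [AddCommGroup W] [Module F W] {τ : F →+* F}
    [RingHomSurjective τ] (g : W →ₛₗ[τ] V) {Ψ : W → W} {B : V → V}
    (hg : ∀ w, B (g w) = g (Ψ w)) : DiffStab B (LinearMap.range g) := by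
  rintro _ ⟨w, rfl⟩
  exact ⟨Ψ w, (hg w).symm⟩

theorem eq_bot_or_eq_range_of_diffStab {W : Type*} [AddCommGroup W] [Module F W] {τ : F →+* F}
    [RingHomSurjective τ] (g : W →ₛₗ[τ] V) {Ψ : W → W} {B : V → V}
    (hg : ∀ w, B (g w) = g (Ψ w))
    (hirr : ∀ q : Submodule F W, DiffStab Ψ q → q = ⊥ ∨ q = ⊤)
    {p : Submodule F V} (hpg : p ≤ LinearMap.range g) (hp : DiffStab B p) :
    p = ⊥ ∨ p = LinearMap.range g := by
  have hq : DiffStab Ψ (p.comap g) := fun w hw => by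
    simpa [← hg] using hp _ hw
  rcases hirr _ hq with h | h
  · refine Or.inl (eq_bot_iff.2 fun x hx => ?_)
    obtain ⟨w, rfl⟩ := hpg hx
    have hw : w ∈ p.comap g := hx
    simp_all
  · refine Or.inr (le_antisymm hpg ?_)
    rintro _ ⟨w, rfl⟩
    exact (h ▸ Submodule.mem_top : w ∈ p.comap g)

end StableSubmodules

section Projections

variable {F V : Type*} [Field F] [AddCommGroup V] [Module F V] {Q : Submodule F V}

theorem LinearMap.IsProj.inv_card_smul_sum {ι : Type*} {s : Finset ι} {π : ι → V →ₗ[F] V}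
    (h : ∀ i ∈ s, LinearMap.IsProj Q (π i)) (hs : (#s : F) ≠ 0) :
    LinearMap.IsProj Q ((#s : F)⁻¹ • ∑ i ∈ s, π i) where
  map_mem x := by
    simpa using Q.smul_mem _ (Q.sum_mem fun i hi => (h i hi).map_mem x)
  map_id x hx := by
    simp [sum_congr rfl fun i hi => (h i hi).map_id x hx, ← Nat.cast_smul_eq_nsmul F, smul_smul,
      inv_mul_cancel₀ hs]

theorem Submodule.projection_map_of_diffStab {G : Type*} [FunLike G V V] [AddMonoidHomClass G V V]
    (g : G) {P : Submodule F V} (hQ : DiffStab g Q) (hP : DiffStab g P) (hQP : IsCompl Q P)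
    (x : V) : Q.projection P hQP (g x) = g (Q.projection P hQP x) := by
  set π := Q.projection P hQP
  have hx : x - π x ∈ P := by
    rw [← Submodule.projection_apply_eq_zero_iff hQP, map_sub, ← Module.End.mul_apply,
      (Submodule.isIdempotentElem_projection hQP).eq, sub_self]
  calc π (g x) = π (g (π x)) + π (g (x - π x)) := by
        rw [← map_add, ← map_add, add_sub_cancel]
    _ = g (π x) := by
      rw [Submodule.projection_apply_of_mem_left hQP (hQ _ (Submodule.projection_apply_mem hQP x)),
        (Submodule.projection_apply_eq_zero_iff hQP).2 (hP _ hx), add_zero]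

theorem exists_diffStab_isCompl_of_isProj {G : Type*} [FunLike G V V] [AddMonoidHomClass G V V]
    (g : G) {β : V →ₗ[F] V} (hβ : LinearMap.IsProj Q β) (hβg : ∀ x, β (g x) = g (β x)) :
    ∃ R, DiffStab g R ∧ IsCompl Q R :=
  ⟨LinearMap.ker β, fun x hx => by simp_all [LinearMap.mem_ker], hβ.isCompl⟩

end Projections

section Semilinear

variable {F V : Type*} [Field F] [AddCommGroup V] [Module F V] {σ : F ≃+* F} {A : V ≃+ V}

def semilinearIterate (hA : ∀ (f : F) (v : V), A (f • v) = σ f • A v) (n : ℕ) :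
    V →ₛₗ[((σ ^ n : F ≃+* F) : F →+* F)] V where
  toFun := A^[n]
  map_add' := iterate_map_add (A : V →+ V) n
  map_smul' f v := by
    induction n generalizing f v with
    | zero => simp
    | succ n ih => rw [iterate_succ_apply, hA, ih, iterate_succ_apply, pow_succ]; rfl

@[simp]
theorem coe_semilinearIterate (hA : ∀ (f : F) (v : V), A (f • v) = σ f • A v) (n : ℕ) :
    ⇑(semilinearIterate hA n) = (⇑A)^[n] := rfl

theorem AddEquiv.symm_map_smul_of_map_smul (hA : ∀ (f : F) (v : V), A (f • v) = σ f • A v)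
    (f : F) (v : V) :
    A.symm (f • v) = σ.symm f • A.symm v :=
  A.injective (by rw [hA, A.apply_symm_apply, σ.apply_symm_apply, A.apply_symm_apply])

theorem DiffStab.symm [FiniteDimensional F V] (hA : ∀ (f : F) (v : V), A (f • v) = σ f • A v)
    {Q : Submodule F V} (hQ : DiffStab A Q) : DiffStab A.symm Q := by
  -- a semilinear bijection preserves dimension, so `A` maps `Q` onto `Q`
  have := RingHomInvPair.of_ringEquiv (σ ^ 1)
  have := RingHomInvPair.of_ringEquiv_symm (σ ^ 1)
  let e := Q.equivMapOfInjective (semilinearIterate hA 1) (A.injective.iterate 1)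
  have hrank : Module.finrank F (Q.map (semilinearIterate hA 1)) = Module.finrank F Q :=
    congrArg Cardinal.toNat
      (rank_eq_of_equiv_equiv _ e.toAddEquiv (σ ^ 1).bijective e.map_smulₛₗ).symm
  have hmap : Q.map (semilinearIterate hA 1) = Q :=
    Submodule.eq_of_le_of_finrank_eq (Submodule.map_le_iff_le_comap.2 hQ) hrank
  intro x hx
  rw [← hmap] at hx
  obtain ⟨y, hy, rfl⟩ := hx
  simpa using hy

def conjSymm (hA : ∀ (f : F) (v : V), A (f • v) = σ f • A v) :
    (V →ₗ[F] V) →ₛₗ[(σ.symm : F →+* F)] (V →ₗ[F] V) where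
  toFun π :=
    { toFun x := A.symm (π (A x))
      map_add' x y := by simp
      map_smul' f x := by simp [hA, AddEquiv.symm_map_smul_of_map_smul hA] }
  map_add' π π' := by ext; simp
  map_smul' f π := by ext; simp [AddEquiv.symm_map_smul_of_map_smul hA]

@[simp]
theorem conjSymm_apply (hA : ∀ (f : F) (v : V), A (f • v) = σ f • A v) (π : V →ₗ[F] V)
    (x : V) :
    conjSymm hA π x = A.symm (π (A x)) := rfl

theorem conjSymm_iterate_apply (hA : ∀ (f : F) (v : V), A (f • v) = σ f • A v)
    (π : V →ₗ[F] V) (n : ℕ) (x : V) :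
    ((conjSymm hA)^[n] π) x = (⇑A.symm)^[n] (π (A^[n] x)) := by
  induction n generalizing π with
  | zero => rfl
  | succ n ih => rw [iterate_succ_apply, ih, iterate_succ_apply, iterate_succ_apply']; rfl

theorem LinearMap.IsProj.conjSymm (hA : ∀ (f : F) (v : V), A (f • v) = σ f • A v)
    {Q : Submodule F V} (hQ : DiffStab A Q) (hQ' : DiffStab A.symm Q) {π : V →ₗ[F] V}
    (hπ : LinearMap.IsProj Q π) :
    LinearMap.IsProj Q (conjSymm hA π) where
  map_mem x := hQ' _ (hπ.map_mem _)
  map_id x hx := by simp [hπ.map_id _ (hQ x hx)]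

theorem exists_diffStab_isCompl_of_iterate [FiniteDimensional F V]
    (hA : ∀ (f : F) (v : V), A (f • v) = σ f • A v) {k : ℕ} (hk : (k : F) ≠ 0)
    {Q P : Submodule F V} (hQ : DiffStab A Q) (hP : DiffStab A^[k] P) (hQP : IsCompl Q P) :
    ∃ R, DiffStab A R ∧ IsCompl Q R := by
  set c := conjSymm hA
  set π := Q.projection P hQP
  have hπ : LinearMap.IsProj Q π :=
    ⟨Submodule.projection_apply_mem hQP, fun _ ↦ Submodule.projection_apply_of_mem_left hQP⟩
  have hπk : IsPeriodicPt c k π := LinearMap.ext fun x => by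
    rw [conjSymm_iterate_apply, ← coe_semilinearIterate hA,
      Submodule.projection_map_of_diffStab _ (hQ.iterate k) hP, coe_semilinearIterate,
      LeftInverse.iterate A.symm_apply_apply k]
  set β := (#(range k) : F)⁻¹ • ∑ i ∈ range k, c^[i] π
  have hβ : LinearMap.IsProj Q β := .inv_card_smul_sum
    (fun i _ => Iterate.rec (LinearMap.IsProj Q) hπ
      (fun _ => LinearMap.IsProj.conjSymm hA hQ (hQ.symm hA)) i) (by simpa using hk)
  have hcβ : c β = β := by
    rw [map_smulₛₗ, map_sum_range_iterate_of_isPeriodicPt c hπk, map_inv₀, map_natCast]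
  refine exists_diffStab_isCompl_of_isProj A hβ fun x => ?_
  rw [← A.apply_symm_apply (β (A x))]
  exact congrArg A (LinearMap.congr_fun hcβ x)

end Semilinear

theorem induced_of_irreducible_semisimple_general {F W V : Type*} [Field F] [CharZero F]
    [AddCommGroup W] [Module F W]
    [AddCommGroup V] [Module F V] [FiniteDimensional F V]
    (φ : F ≃+* F) (s t : ℕ)
    (Ψ : W ≃+ W)
    (hirr : ∀ p : Submodule F W, DiffStab ⇑Ψ p → p = ⊥ ∨ p = ⊤)
    (A : V ≃+ V) (hA : ∀ (f : F) (v : V), A (f • v) = (⇑φ)^[s] f • A v)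
    (hInd : IsInducedTw (id : F → F) ⇑A (t / s) ⇑Ψ) :
    ∀ Q : Submodule F V, DiffStab ⇑A Q →
      ∃ R : Submodule F V, DiffStab ⇑A R ∧ IsCompl Q R := by
  intro Q hQ
  obtain ⟨j, hj, hjΨ, hrep⟩ := hInd
  rw [← RingAut.coe_pow] at hA
  generalize t / s = k at hjΨ hrep
  obtain _ | k := k
  · have hQ : Q = ⊥ := (Submodule.eq_bot_iff Q).2 fun v _ => by
      obtain ⟨c, hc, -⟩ := hrep v
      simpa using hc
    exact ⟨⊤, fun _ _ => Submodule.mem_top, hQ ▸ isCompl_bot_top⟩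
  let jₗ : W →ₗ[F] V := { j with map_smul' := hj }
  let g (i : Fin (k + 1)) := (semilinearIterate hA i).comp jₗ
  have hgΨ (i : Fin (k + 1)) (w : W) : A^[k + 1] (g i w) = g i (Ψ w) := by
    show A^[k + 1] (A^[i] (j w)) = A^[i] (j (Ψ w))
    rw [← hjΨ]
    exact Commute.iterate_iterate_self A (k + 1) i (j w)
  have hgtop : ⨆ i, LinearMap.range (g i) = ⊤ := eq_top_iff.2 fun v _ => by
    obtain ⟨c, rfl, -⟩ := hrep v
    exact Submodule.sum_mem _ fun i _ => Submodule.mem_iSup_of_mem i ⟨c i, rfl⟩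
  obtain ⟨P, hP, hQP⟩ := exists_diffStab_isCompl_of_iSup_eq_top
    (semilinearIterate hA (k + 1)).toAddMonoidHom _ (fun i => diffStab_range _ (hgΨ i))
    (fun i _ => eq_bot_or_eq_range_of_diffStab _ (hgΨ i) hirr) hgtop Q (hQ.iterate (k + 1))
  exact exists_diffStab_isCompl_of_iterate hA (Nat.cast_ne_zero.2 k.succ_ne_zero) hQ hP hQP

/-- Induction of an irreducible module is semisimple (char 0): let `s ∣ t`, let
`N = (W, Ψ)` be an irreducible finite-dimensional `D_t`-module and let `(V, A)` be
the induced `D_s`-module `N↑^s_t = D_s ⊗_{D_t} N`.  Then every `D_s`-submodule `Q`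
of `N↑^s_t` is a direct summand: it has a `D_s`-stable complement (obtained by
averaging a `D_t`-linear projection onto `Q` over the cosets). -/
theorem induced_of_irreducible_semisimple {F W V : Type*} [Field F] [CharZero F]
    [AddCommGroup W] [Module F W] [FiniteDimensional F W]
    [AddCommGroup V] [Module F V] [FiniteDimensional F V]
    (φ : F ≃+* F) (s t : ℕ) (hs : 0 < s) (hst : s ∣ t)
    (Ψ : W ≃+ W) (hΨ : ∀ (f : F) (w : W), Ψ (f • w) = (⇑φ)^[t] f • Ψ w)
    (hntW : Nontrivial W)
    (hirr : ∀ p : Submodule F W, DiffStab ⇑Ψ p → p = ⊥ ∨ p = ⊤)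
    (A : V ≃+ V) (hA : ∀ (f : F) (v : V), A (f • v) = (⇑φ)^[s] f • A v)
    (hInd : IsInducedTw (id : F → F) ⇑A (t / s) ⇑Ψ) :
    ∀ Q : Submodule F V, DiffStab ⇑A Q →
      ∃ R : Submodule F V, DiffStab ⇑A R ∧ IsCompl Q R :=
  induced_of_irreducible_semisimple_general φ s t Ψ hirr A hA hInd
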